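/- arXiv:2008.03486 — 2 statements merged into one kernel-verified Lean document; each statement's English description precedes it below -/
import Mathlib

section
/- Let f : [0,1] → [0,1] be continuous and not admitting a splitting sequence. Suppose 0 ≤ d < e ≤ 1 and either d and e are both fixed points of f, or {d, e} is a 2-cycle (f(d) = e and f(e) = d). Then there is exactly one connected component C of f⁻¹((d, e)) with f(C) = (d, e). -/
open Set Filter Topology

/-- `IsSplittingSeq f l r N S` : the sequence of closed proper subintervals
`T n = Icc (l n) (r n)` of `[0,1]` is a tight sequence for `f` (i.e. `f (T (n+1)) = T n`
and `T n` is nondegenerate for all large `n`), and it is split by the nondegenerate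
closed intervals `S n` for `n` in the infinite set `N`, meaning
`S n ∩ T n ⊆ {l n, r n}` and `f (S n) = f (T n)`. -/
def IsSplittingSeq (f : ℝ → ℝ) (l r : ℕ → ℝ) (N : Set ℕ) (S : ℕ → Set ℝ) : Prop :=
  (∀ n, l n ≤ r n) ∧
  (∀ n, Icc (l n) (r n) ⊆ Icc 0 1) ∧
  (∀ n, Icc (l n) (r n) ≠ Icc (0:ℝ) 1) ∧
  (∀ n, f '' Icc (l (n+1)) (r (n+1)) = Icc (l n) (r n)) ∧
  (∃ m, ∀ n > m, l n < r n) ∧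
  N.Infinite ∧
  (∀ n ∈ N, (∃ u v : ℝ, u < v ∧ S n = Icc u v) ∧ S n ⊆ Icc 0 1 ∧
    S n ∩ Icc (l n) (r n) ⊆ {l n, r n} ∧ f '' S n = f '' Icc (l n) (r n))

/-- `f` admits a splitting sequence. -/
def SplittingSeq (f : ℝ → ℝ) : Prop := ∃ l r N S, IsSplittingSeq f l r N S

/-! Inside `[d, e]` take a minimal interval `[a, b]` with `f [a, b] = [d, e]`: `a` is the last
point of `[d, e]` sent to `f d`, and `b` the first point after `a` sent to `f e`. Then `f` maps
`(a, b)` into `(d, e)` and `a`, `b` out of it, so `(a, b)` is a component of `f⁻¹ (d, e)` mapped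
onto `(d, e)`. Were there another such component `C`, its closure `K` would be an interval with
`f K ⊇ [a, b]` and meeting `[a, b]` at most in its endpoints. Pulling `[a, b]` back into itself
again and again gives a tight sequence `T n ⊆ [a, b]`, and pulling each `T n` back into `K` splits
`T (n + 1)`: a splitting sequence. -/

theorem mem_uIcc_or_mem_uIcc_of_notMem_uIoo {α : Type*} [LinearOrder α] {p q z : α}
    (hz : z ∉ uIoo p q) : p ∈ uIcc z q ∨ q ∈ uIcc p z := by
  simp only [uIoo, mem_Ioo, mem_uIcc, not_and_or, not_lt] at hz ⊢
  grind

section Continuous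

variable {α δ : Type*} [ConditionallyCompleteLinearOrder α] [TopologicalSpace α]
  [OrderTopology α] [DenselyOrdered α] [LinearOrder δ] [TopologicalSpace δ]
  [OrderClosedTopology δ] {f : α → δ}

theorem exists_Icc_subset_mapsTo_uIoo {x y : α} (hxy : x ≤ y) (hf : ContinuousOn f (Icc x y))
    (hne : f x ≠ f y) :
    ∃ a b, x ≤ a ∧ a < b ∧ b ≤ y ∧ f a = f x ∧ f b = f y ∧
      MapsTo f (Ioo a b) (uIoo (f x) (f y)) := by
  have hlevel : ∀ u c, x ≤ u → IsCompact (Icc u y ∩ f ⁻¹' {c}) := fun u c hu =>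
    isCompact_Icc.of_isClosed_subset
      ((hf.mono (Icc_subset_Icc_left hu)).preimage_isClosed_of_isClosed isClosed_Icc
        isClosed_singleton) inter_subset_left
  -- `a` is the last visit of `f` to `f x`, and `b` the first visit to `f y` after `a`
  obtain ⟨a, ⟨⟨hxa, hay⟩, hfa⟩, ha⟩ :=
    (hlevel x (f x) le_rfl).exists_isGreatest ⟨x, ⟨le_rfl, hxy⟩, rfl⟩
  obtain ⟨b, ⟨⟨hab_le, hby⟩, hfb⟩, hb⟩ :=
    (hlevel a (f y) hxa).exists_isLeast ⟨y, ⟨hay, le_rfl⟩, rfl⟩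
  rw [mem_preimage, mem_singleton_iff] at hfa hfb
  have hab : a < b := hab_le.lt_of_ne (by rintro rfl; exact hne (hfa.symm.trans hfb))
  refine ⟨a, b, hxa, hab, hby, hfa, hfb, fun t ht => ?_⟩
  by_contra hft
  rcases mem_uIcc_or_mem_uIcc_of_notMem_uIoo hft with hx | hy
  · have htb : uIcc t b ⊆ Icc x y := by
      rw [uIcc_of_le ht.2.le]; exact Icc_subset_Icc (hxa.trans ht.1.le) hby
    obtain ⟨s, hs, hfs⟩ := intermediate_value_uIcc (hf.mono htb) (hfb ▸ hx)
    rw [uIcc_of_le ht.2.le] at hs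
    exact (ht.1.trans_le hs.1).not_ge
      (ha ⟨⟨(hxa.trans ht.1.le).trans hs.1, hs.2.trans hby⟩, hfs⟩)
  · have hat : uIcc a t ⊆ Icc x y := by
      rw [uIcc_of_le ht.1.le]; exact Icc_subset_Icc hxa (ht.2.le.trans hby)
    obtain ⟨s, hs, hfs⟩ := intermediate_value_uIcc (hf.mono hat) (hfa ▸ hy)
    rw [uIcc_of_le ht.1.le] at hs
    exact (hs.2.trans_lt ht.2).not_ge (hb ⟨⟨hs.1, hs.2.trans (ht.2.le.trans hby)⟩, hfs⟩)

theorem image_Icc_eq_uIcc_of_mapsTo_uIoo {a b : α} (hab : a ≤ b) (hf : ContinuousOn f (Icc a b))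
    (h : MapsTo f (Ioo a b) (uIoo (f a) (f b))) : f '' Icc a b = uIcc (f a) (f b) := by
  refine Subset.antisymm ?_ ?_
  · rintro _ ⟨t, ht, rfl⟩
    rcases eq_endpoints_or_mem_Ioo_of_mem_Icc ht with rfl | rfl | ht
    exacts [left_mem_uIcc, right_mem_uIcc, uIoo_subset_uIcc_self (h ht)]
  · rw [← uIcc_of_le hab] at hf ⊢
    exact intermediate_value_uIcc hf

theorem image_Ioo_eq_uIoo_of_mapsTo_uIoo {a b : α} (hab : a ≤ b) (hf : ContinuousOn f (Icc a b))
    (h : MapsTo f (Ioo a b) (uIoo (f a) (f b))) : f '' Ioo a b = uIoo (f a) (f b) := by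
  refine Subset.antisymm h.image_subset fun w hw => ?_
  obtain ⟨t, ht, rfl⟩ :=
    (image_Icc_eq_uIcc_of_mapsTo_uIoo hab hf h).symm ▸ uIoo_subset_uIcc_self hw
  rcases eq_endpoints_or_mem_Ioo_of_mem_Icc ht with rfl | rfl | ht
  exacts [(left_notMem_uIoo hw).elim, (right_notMem_uIoo hw).elim, mem_image_of_mem f ht]

theorem exists_Icc_subset_image_eq_uIcc {s : Set α} (hs : s.OrdConnected) (hf : ContinuousOn f s)
    {x y : α} (hx : x ∈ s) (hy : y ∈ s) (hne : f x ≠ f y) :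
    ∃ a b, a < b ∧ Icc a b ⊆ s ∧ f '' Icc a b = uIcc (f x) (f y) := by
  wlog hxy : x ≤ y generalizing x y
  · rw [uIcc_comm]
    exact this hy hx hne.symm (le_of_not_ge hxy)
  obtain ⟨a, b, hxa, hab, hby, hfa, hfb, hmaps⟩ :=
    exists_Icc_subset_mapsTo_uIoo hxy (hf.mono (hs.out hx hy)) hne
  have hsub : Icc a b ⊆ s := (Icc_subset_Icc hxa hby).trans (hs.out hx hy)
  refine ⟨a, b, hab, hsub, ?_⟩
  rw [← hfa, ← hfb] at hmaps ⊢
  exact image_Icc_eq_uIcc_of_mapsTo_uIoo hab.le (hf.mono hsub) hmaps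

theorem connectedComponentIn_eq_Ioo {U : Set α} {a b x : α} (hU : Ioo a b ⊆ U) (ha : a ∉ U)
    (hb : b ∉ U) (hx : x ∈ Ioo a b) : connectedComponentIn U x = Ioo a b := by
  refine Subset.antisymm (fun y hy => ?_) (isPreconnected_Ioo.subset_connectedComponentIn hx hU)
  have hord := (isPreconnected_connectedComponentIn (F := U) (x := x)).ordConnected
  have hxC := mem_connectedComponentIn (hU hx)
  by_contra hy'
  rcases not_and_or.1 hy' with h | h <;> rw [not_lt] at h
  · exact ha (connectedComponentIn_subset U x (hord.out hy hxC ⟨h, hx.1.le⟩))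
  · exact hb (connectedComponentIn_subset U x (hord.out hxC hy ⟨hx.2.le, h⟩))

end Continuous

section Real

variable {f : ℝ → ℝ}

theorem exists_Icc_subset_image_eq_Icc {s : Set ℝ} (hs : s.OrdConnected)
    (hf : ContinuousOn f s) {l r : ℝ} (hlr : l < r) (hsub : Icc l r ⊆ f '' s) :
    ∃ l' r', l' < r' ∧ Icc l' r' ⊆ s ∧ f '' Icc l' r' = Icc l r := by
  obtain ⟨x, hx, rfl⟩ := hsub (left_mem_Icc.2 hlr.le)
  obtain ⟨y, hy, rfl⟩ := hsub (right_mem_Icc.2 hlr.le)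
  rw [← uIcc_of_le hlr.le]
  exact exists_Icc_subset_image_eq_uIcc hs hf hx hy hlr.ne

theorem exists_tight_seq {a b : ℝ} (hab : a < b) (hf : ContinuousOn f (Icc a b))
    (hself : Icc a b ⊆ f '' Icc a b) :
    ∃ l r : ℕ → ℝ, ∀ n, Icc (l n) (r n) ⊆ Icc a b ∧ l n < r n ∧
      f '' Icc (l (n + 1)) (r (n + 1)) = Icc (l n) (r n) := by
  let I := {p : ℝ × ℝ // Icc p.1 p.2 ⊆ Icc a b ∧ p.1 < p.2}
  have hstep : ∀ p : I, ∃ q : I, f '' Icc q.1.1 q.1.2 = Icc p.1.1 p.1.2 := fun p => by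
    obtain ⟨l, r, hlr, hsub, himg⟩ := exists_Icc_subset_image_eq_Icc ordConnected_Icc hf p.2.2
      (p.2.1.trans hself)
    exact ⟨⟨(l, r), hsub, hlr⟩, himg⟩
  choose g hg using hstep
  let T : ℕ → I := fun n => g^[n] ⟨(a, b), subset_rfl, hab⟩
  refine ⟨fun n => (T n).1.1, fun n => (T n).1.2, fun n => ⟨(T n).2.1, (T n).2.2, ?_⟩⟩
  simp only [T, Function.iterate_succ_apply']
  exact hg _

theorem splittingSeq_of_disjoint_cover {a b : ℝ} {K : Set ℝ}
    (hf : ContinuousOn f (Icc 0 1)) (hab : a < b) (hab01 : Icc a b ⊆ Icc 0 1)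
    (hself : Icc a b ⊆ f '' Icc a b) (hK : K.OrdConnected) (hK01 : K ⊆ Icc 0 1)
    (hcover : Icc a b ⊆ f '' K) (hdisj : Disjoint K (Ioo a b)) : SplittingSeq f := by
  have hKab : K ∩ Icc a b ⊆ {a, b} := fun z ⟨hzK, hz⟩ =>
    Icc_sdiff_Ioo_same hab.le ▸ ⟨hz, disjoint_left.1 hdisj hzK⟩
  -- were `[a, b] = [0, 1]`, `K ⊆ {a, b}` would have finite image
  have hproper : Icc a b ≠ Icc 0 1 := fun h => by
    have hK2 : K ⊆ {a, b} := fun z hz => hKab ⟨hz, h ▸ hK01 hz⟩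
    exact Icc_infinite hab (((toFinite {a, b}).image f).subset (hcover.trans (image_mono hK2)))
  obtain ⟨l, r, hT⟩ := exists_tight_seq hab (hf.mono hab01) hself
  choose u v huv hSK hSimg using fun n =>
    exists_Icc_subset_image_eq_Icc hK (hf.mono hK01) (hT n).2.1 ((hT n).1.trans hcover)
  refine ⟨l, r, Ici 1, fun n => Icc (u (n - 1)) (v (n - 1)), fun n => (hT n).2.1.le,
    fun n => (hT n).1.trans hab01, fun n h => hproper (hab01.antisymm (h ▸ (hT n).1)),
    fun n => (hT n).2.2, ⟨0, fun n _ => (hT n).2.1⟩, Ici_infinite 1, ?_⟩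
  rintro n (hn : 1 ≤ n)
  obtain ⟨m, rfl⟩ := Nat.exists_eq_add_of_le' hn
  simp only [Nat.add_sub_cancel]
  refine ⟨⟨_, _, huv m, rfl⟩, (hSK m).trans hK01, ?_, by rw [hSimg, (hT m).2.2]⟩
  rintro z ⟨hzS, hzT⟩
  have hTab := (hT (m + 1)).1
  rcases hKab ⟨hSK m hzS, hTab hzT⟩ with rfl | rfl
  · exact Or.inl (le_antisymm (hTab (left_mem_Icc.2 (hT _).2.1.le)).1 hzT.1)
  · exact Or.inr (le_antisymm hzT.2 (hTab (right_mem_Icc.2 (hT _).2.1.le)).2)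

theorem splittingSeq_of_disjoint_preconnected {a b : ℝ} {C : Set ℝ}
    (hf : ContinuousOn f (Icc 0 1)) (hab : a < b) (hab01 : Icc a b ⊆ Icc 0 1)
    (hself : Icc a b ⊆ f '' Icc a b) (hC : IsPreconnected C) (hC01 : C ⊆ Icc 0 1)
    (hcover : Icc a b ⊆ closure (f '' C)) (hdisj : Disjoint C (Ioo a b)) : SplittingSeq f := by
  have hK01 : closure C ⊆ Icc 0 1 := closure_minimal hC01 isClosed_Icc
  refine splittingSeq_of_disjoint_cover hf hab hab01 hself hC.closure.ordConnected hK01 ?_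
    (hdisj.closure_left isOpen_Ioo)
  rwa [image_closure_of_isCompact (isCompact_Icc.of_isClosed_subset isClosed_closure hK01)
    (hf.mono hK01)]

end Real

theorem stmt_2_general (f : ℝ → ℝ) (hf : ContinuousOn f (Icc 0 1))
    (hns : ¬ SplittingSeq f) (d e : ℝ) (hd0 : 0 ≤ d) (hde : d < e) (he1 : e ≤ 1)
    (hfix : (f d = d ∧ f e = e) ∨ (f d = e ∧ f e = d)) :
    ∃! C : Set ℝ, (∃ x ∈ Icc (0:ℝ) 1 ∩ f ⁻¹' Ioo d e,
        C = connectedComponentIn (Icc (0:ℝ) 1 ∩ f ⁻¹' Ioo d e) x) ∧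
      f '' C = Ioo d e := by
  set U := Icc (0:ℝ) 1 ∩ f ⁻¹' Ioo d e
  have hpair : f d ⊓ f e = d ∧ f d ⊔ f e = e := by
    rcases hfix with ⟨h1, h2⟩ | ⟨h1, h2⟩ <;> simp [h1, h2, hde.le]
  have hne : f d ≠ f e := fun h => by
    simp only [h, min_self, max_self] at hpair
    exact hde.ne (hpair.1.symm.trans hpair.2)
  obtain ⟨a, b, hda, hab, hbe, hfa, hfb, hmaps⟩ :=
    exists_Icc_subset_mapsTo_uIoo hde.le (hf.mono (Icc_subset_Icc hd0 he1)) hne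
  rw [← hfa, ← hfb] at hmaps hpair
  have hJ : uIoo (f a) (f b) = Ioo d e := by rw [uIoo, hpair.1, hpair.2]
  have hab01 : Icc a b ⊆ Icc 0 1 := Icc_subset_Icc (hd0.trans hda) (hbe.trans he1)
  have hIoo : f '' Ioo a b = Ioo d e :=
    hJ ▸ image_Ioo_eq_uIoo_of_mapsTo_uIoo hab.le (hf.mono hab01) hmaps
  have hself : Icc a b ⊆ f '' Icc a b := by
    rw [image_Icc_eq_uIcc_of_mapsTo_uIoo hab.le (hf.mono hab01) hmaps, uIcc, hpair.1, hpair.2]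
    exact Icc_subset_Icc hda hbe
  have hIooU : Ioo a b ⊆ U := fun t ht =>
    ⟨hab01 (Ioo_subset_Icc_self ht), hIoo ▸ ⟨t, ht, rfl⟩⟩
  have hcomp : ∀ x ∈ Ioo a b, connectedComponentIn U x = Ioo a b := fun x hx =>
    connectedComponentIn_eq_Ioo hIooU (fun h => left_notMem_uIoo (hJ ▸ h.2))
      (fun h => right_notMem_uIoo (hJ ▸ h.2)) hx
  obtain ⟨m, hm⟩ := nonempty_Ioo.2 hab
  refine ⟨Ioo a b, ⟨⟨m, hIooU hm, (hcomp m hm).symm⟩, hIoo⟩, ?_⟩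
  rintro _ ⟨⟨x, -, rfl⟩, hC⟩
  by_contra hneq
  refine hns (splittingSeq_of_disjoint_preconnected hf hab hab01 hself
    isPreconnected_connectedComponentIn (fun z hz => (connectedComponentIn_subset U x hz).1)
    (by rw [hC, closure_Ioo hde.ne]; exact Icc_subset_Icc hda hbe) ?_)
  exact disjoint_left.2 fun z hzC hz => hneq (by rw [connectedComponentIn_eq hzC, hcomp z hz])

theorem stmt_2 (f : ℝ → ℝ) (hf : ContinuousOn f (Icc 0 1))
    (hmaps : MapsTo f (Icc 0 1) (Icc 0 1))
    (hns : ¬ SplittingSeq f) (d e : ℝ) (hd0 : 0 ≤ d) (hde : d < e) (he1 : e ≤ 1)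
    (hfix : (f d = d ∧ f e = e) ∨ (f d = e ∧ f e = d)) :
    ∃! C : Set ℝ, (∃ x ∈ Icc (0:ℝ) 1 ∩ f ⁻¹' Ioo d e,
        C = connectedComponentIn (Icc (0:ℝ) 1 ∩ f ⁻¹' Ioo d e) x) ∧
      f '' C = Ioo d e :=
  stmt_2_general f hf hns d e hd0 hde he1 hfix
end

section
/- Let f : [0,1] → [0,1] be continuous, surjective, and not admitting a splitting sequence. Let a = max f⁻¹(0) and b = min f⁻¹(1), and suppose b < a. Then f has exactly one fixed point. -/
open Set Filter Topology

/-!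
A fixed point exists in `(b, a)` by the intermediate value theorem. Two fixed points `p < q` with
`[p, q] ≠ [0, 1]` would produce a splitting sequence: starting from `T₀ = [p, q]`, choose inside
each `Tₙ` a minimal subinterval `Tₙ₊₁` crossing `Tₙ`, whose endpoints go to the endpoints of `Tₙ`
and whose interior goes into the interior of `Tₙ`. Every `Tₙ₊₁` is then split. If `f` maps
`min Tₙ₊₁` to `min Tₙ`, a minimal crossing of `Tₙ` inside the fold `[b, a]`, where `f` runs from
`1` down to `0`, has the opposite orientation, so it meets `Tₙ₊₁` only at endpoints. If `f` maps
`min Tₙ₊₁` to `max Tₙ`, a minimal crossing of `Tₙ` inside `[p, min Tₙ₊₁]` splits it, because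
`f p = p` lies below `Tₙ`.
-/

section Crossing

variable {f : ℝ → ℝ} {c d α β : ℝ}

lemma isCompact_Icc_inter_preimage_singleton (hf : ContinuousOn f (Icc c d)) (β : ℝ) :
    IsCompact (Icc c d ∩ f ⁻¹' {β}) :=
  isCompact_Icc.of_isClosed_subset
    (hf.preimage_isClosed_of_isClosed isClosed_Icc isClosed_singleton) inter_subset_left

/-- `v` is the first hit of `β`, then `u` the last hit of `α` before `v`. -/
lemma exists_crossing_of_le_of_le (hf : ContinuousOn f (Icc c d)) (hcd : c ≤ d) (hαβ : α < β)
    (hc : f c ≤ α) (hd : β ≤ f d) :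
    ∃ u v, c ≤ u ∧ u < v ∧ v ≤ d ∧ f u = α ∧ f v = β ∧ MapsTo f (Ioo u v) (Ioo α β) := by
  obtain ⟨v, ⟨hv, hfv⟩, hv_least⟩ :=
    (isCompact_Icc_inter_preimage_singleton hf β).exists_isLeast
      (intermediate_value_Icc hcd hf ⟨hc.trans hαβ.le, hd⟩)
  have hfcv : ContinuousOn f (Icc c v) := hf.mono (Icc_subset_Icc_right hv.2)
  obtain ⟨u, ⟨hu, hfu⟩, hu_greatest⟩ :=
    (isCompact_Icc_inter_preimage_singleton hfcv α).exists_isGreatest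
      (intermediate_value_Icc hv.1 hfcv ⟨hc, hfv ▸ hαβ.le⟩)
  have huv : u < v := hu.2.lt_of_ne (by rintro rfl; exact hαβ.ne (hfu.symm.trans hfv))
  refine ⟨u, v, hu.1, huv, hv.2, hfu, hfv, fun s hs => ⟨?_, ?_⟩⟩
  · by_contra! h
    obtain ⟨t, ht, hft⟩ := intermediate_value_Icc hs.2.le
      (hf.mono (Icc_subset_Icc (hu.1.trans hs.1.le) hv.2)) ⟨h, hfv ▸ hαβ.le⟩
    exact (hs.1.trans_le ht.1).not_ge (hu_greatest ⟨⟨hu.1.trans (hs.1.le.trans ht.1), ht.2⟩, hft⟩)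
  · by_contra! h
    obtain ⟨t, ht, hft⟩ := intermediate_value_Icc (hu.1.trans hs.1.le)
      (hf.mono (Icc_subset_Icc_right (hs.2.le.trans hv.2))) ⟨hc.trans hαβ.le, h⟩
    exact (ht.2.trans_lt hs.2).not_ge (hv_least ⟨⟨ht.1, ht.2.trans (hs.2.le.trans hv.2)⟩, hft⟩)

lemma exists_crossing_of_ge_of_ge (hf : ContinuousOn f (Icc c d)) (hcd : c ≤ d) (hαβ : α < β)
    (hc : β ≤ f c) (hd : f d ≤ α) :
    ∃ u v, c ≤ u ∧ u < v ∧ v ≤ d ∧ f u = β ∧ f v = α ∧ MapsTo f (Ioo u v) (Ioo α β) := by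
  obtain ⟨u, v, hcu, huv, hvd, hfu, hfv, hmaps⟩ :=
    exists_crossing_of_le_of_le hf.neg hcd (neg_lt_neg hαβ) (neg_le_neg hc) (neg_le_neg hd)
  refine ⟨u, v, hcu, huv, hvd, neg_inj.1 hfu, neg_inj.1 hfv, fun s hs => ?_⟩
  obtain ⟨h₁, h₂⟩ := hmaps hs
  exact ⟨lt_of_neg_lt_neg h₂, lt_of_neg_lt_neg h₁⟩

lemma image_Icc_eq_of_mapsTo_Ioo {u v : ℝ} (hf : ContinuousOn f (Icc u v)) (huv : u ≤ v)
    (hαβ : α ≤ β) (hends : f u = α ∧ f v = β ∨ f u = β ∧ f v = α)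
    (hmaps : MapsTo f (Ioo u v) (Ioo α β)) : f '' Icc u v = Icc α β := by
  refine (image_subset_iff.2 fun s hs => ?_).antisymm ?_
  · rcases eq_endpoints_or_mem_Ioo_of_mem_Icc hs with rfl | rfl | hs
    · rcases hends with ⟨h, -⟩ | ⟨h, -⟩ <;> simp [h, hαβ]
    · rcases hends with ⟨-, h⟩ | ⟨-, h⟩ <;> simp [h, hαβ]
    · exact Ioo_subset_Icc_self (hmaps hs)
  · rcases hends with ⟨h₁, h₂⟩ | ⟨h₁, h₂⟩
    · simpa [h₁, h₂] using intermediate_value_Icc huv hf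
    · simpa [h₁, h₂] using intermediate_value_Icc' huv hf

lemma Icc_inter_Icc_subset_pair_of_mapsTo {t : Set ℝ} {u v u' v' : ℝ}
    (h : MapsTo f (Ioo u v) t) (h' : MapsTo f (Ioo u' v') t) (hu : f u ∉ t) (hu' : f u' ∉ t)
    (hne : u ≠ u') : Icc u v ∩ Icc u' v' ⊆ {u', v'} := by
  rintro s ⟨hs, hs'⟩
  by_contra hs_ne
  simp only [mem_insert_iff, mem_singleton_iff, not_or] at hs_ne
  have hs'' : s ∈ Ioo u' v' := ⟨hs'.1.lt_of_ne' hs_ne.1, hs'.2.lt_of_ne hs_ne.2⟩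
  rcases hne.lt_or_gt with hlt | hgt
  · exact hu' (h ⟨hlt, hs''.1.trans_le hs.2⟩)
  · exact hu (h' ⟨hgt, hs.1.trans_lt hs''.2⟩)

end Crossing

def IsTightPreimage (f : ℝ → ℝ) (x y x' y' : ℝ) : Prop :=
  x ≤ x' ∧ x' < y' ∧ y' ≤ y ∧ (f x' = x ∧ f y' = y ∨ f x' = y ∧ f y' = x) ∧
    MapsTo f (Ioo x' y') (Ioo x y)

section TightPreimage

variable {f : ℝ → ℝ} {x y x' y' : ℝ}

lemma IsTightPreimage.image_eq (h : IsTightPreimage f x y x' y')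
    (hf : ContinuousOn f (Icc x' y')) : f '' Icc x' y' = Icc x y :=
  image_Icc_eq_of_mapsTo_Ioo hf h.2.1.le ((h.1.trans h.2.1.le).trans h.2.2.1) h.2.2.2.1 h.2.2.2.2

lemma exists_isTightPreimage (hf : ContinuousOn f (Icc x y)) (hxy : x < y)
    (hx : x ∈ f '' Icc x y) (hy : y ∈ f '' Icc x y) : ∃ x' y', IsTightPreimage f x y x' y' := by
  obtain ⟨s, hs, hfs⟩ := hx
  obtain ⟨t, ht, hft⟩ := hy
  have hst : s ≠ t := by rintro rfl; exact hxy.ne (hfs.symm.trans hft)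
  rcases hst.lt_or_gt with hst | hts
  · obtain ⟨u, v, hsu, huv, hvt, hfu, hfv, hmaps⟩ := exists_crossing_of_le_of_le
      (hf.mono (Icc_subset_Icc hs.1 ht.2)) hst.le hxy hfs.le hft.ge
    exact ⟨u, v, hs.1.trans hsu, huv, hvt.trans ht.2, Or.inl ⟨hfu, hfv⟩, hmaps⟩
  · obtain ⟨u, v, htu, huv, hvs, hfu, hfv, hmaps⟩ := exists_crossing_of_ge_of_ge
      (hf.mono (Icc_subset_Icc ht.1 hs.2)) hts.le hxy hft.ge hfs.le
    exact ⟨u, v, ht.1.trans htu, huv, hvs.trans hs.2, Or.inr ⟨hfu, hfv⟩, hmaps⟩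

lemma exists_seq_of_forall_exists {α : Type*} {P : α → Prop} {r : α → α → Prop}
    (h : ∀ a, P a → ∃ b, P b ∧ r a b) {a₀ : α} (h₀ : P a₀) :
    ∃ s : ℕ → α, s 0 = a₀ ∧ ∀ n, r (s n) (s (n + 1)) := by
  choose g hPg hrg using h
  let next : {a // P a} → {a // P a} := fun a => ⟨g a a.2, hPg a a.2⟩
  refine ⟨fun n => (next^[n] ⟨a₀, h₀⟩).1, rfl, fun n => ?_⟩
  simp only [Function.iterate_succ_apply']
  exact hrg _ _

lemma exists_seq_isTightPreimage {p q : ℝ} (hf : ContinuousOn f (Icc p q)) (hpq : p < q)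
    (hfp : f p = p) (hfq : f q = q) :
    ∃ x y : ℕ → ℝ, x 0 = p ∧ y 0 = q ∧
      ∀ n, IsTightPreimage f (x n) (y n) (x (n + 1)) (y (n + 1)) := by
  let P : ℝ × ℝ → Prop := fun c =>
    c.1 < c.2 ∧ Icc c.1 c.2 ⊆ Icc p q ∧ Icc c.1 c.2 ⊆ f '' Icc c.1 c.2
  have hstep : ∀ c, P c → ∃ c', P c' ∧ IsTightPreimage f c.1 c.2 c'.1 c'.2 := by
    rintro ⟨x, y⟩ ⟨hxy, hsub, hcov⟩
    obtain ⟨x', y', h⟩ := exists_isTightPreimage (hf.mono hsub) hxy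
      (hcov (left_mem_Icc.2 hxy.le)) (hcov (right_mem_Icc.2 hxy.le))
    have hsub' : Icc x' y' ⊆ Icc x y := Icc_subset_Icc h.1 h.2.2.1
    refine ⟨(x', y'), ⟨h.2.1, hsub'.trans hsub, ?_⟩, h⟩
    rw [h.image_eq (hf.mono (hsub'.trans hsub))]
    exact hsub'
  have hpq_cov : Icc p q ⊆ f '' Icc p q := by
    simpa [hfp, hfq] using intermediate_value_Icc hpq.le hf
  obtain ⟨s, hs0, hs⟩ := exists_seq_of_forall_exists hstep (a₀ := (p, q)) ⟨hpq, le_rfl, hpq_cov⟩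
  exact ⟨fun n => (s n).1, fun n => (s n).2, congrArg Prod.fst hs0, congrArg Prod.snd hs0, hs⟩

end TightPreimage

section Splitting

variable {f : ℝ → ℝ} {x y x' y' : ℝ}

lemma IsTightPreimage.exists_split_of_preserving {b a : ℝ} (h : IsTightPreimage f x y x' y')
    (hpres : f x' = x) (hf : ContinuousOn f (Icc b a)) (hba : b ≤ a) (hfb : y ≤ f b)
    (hfa : f a ≤ x) :
    ∃ u v, u < v ∧ Icc u v ⊆ Icc b a ∧ Icc u v ∩ Icc x' y' ⊆ {x', y'} ∧
      f '' Icc u v = Icc x y := by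
  have hxy : x < y := (h.1.trans_lt h.2.1).trans_le h.2.2.1
  obtain ⟨u, v, hbu, huv, hva, hfu, hfv, hmaps⟩ := exists_crossing_of_ge_of_ge hf hba hxy hfb hfa
  have hfu_ne : f u ∉ Ioo x y := by simp [hfu]
  have hfx'_ne : f x' ∉ Ioo x y := by simp [hpres]
  refine ⟨u, v, huv, Icc_subset_Icc hbu hva,
    Icc_inter_Icc_subset_pair_of_mapsTo hmaps h.2.2.2.2 hfu_ne hfx'_ne ?_, ?_⟩
  · rintro rfl
    exact hxy.ne' (hfu.symm.trans hpres)
  · exact image_Icc_eq_of_mapsTo_Ioo (hf.mono (Icc_subset_Icc hbu hva)) huv.le hxy.le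
      (Or.inr ⟨hfu, hfv⟩) hmaps

lemma IsTightPreimage.exists_split_of_reversing {p : ℝ} (h : IsTightPreimage f x y x' y')
    (hrev : f x' = y) (hf : ContinuousOn f (Icc p x')) (hpx' : p ≤ x') (hfp : f p ≤ x) :
    ∃ u v, u < v ∧ Icc u v ⊆ Icc p x' ∧ Icc u v ∩ Icc x' y' ⊆ {x', y'} ∧
      f '' Icc u v = Icc x y := by
  have hxy : x < y := (h.1.trans_lt h.2.1).trans_le h.2.2.1
  obtain ⟨u, v, hpu, huv, hvx', hfu, hfv, hmaps⟩ :=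
    exists_crossing_of_le_of_le hf hpx' hxy hfp hrev.ge
  refine ⟨u, v, huv, Icc_subset_Icc hpu hvx', fun s hs => Or.inl ?_, ?_⟩
  · exact le_antisymm (hs.1.2.trans hvx') hs.2.1
  · exact image_Icc_eq_of_mapsTo_Ioo (hf.mono (Icc_subset_Icc hpu hvx')) huv.le hxy.le
      (Or.inl ⟨hfu, hfv⟩) hmaps

lemma IsTightPreimage.exists_split {a b p : ℝ} (h : IsTightPreimage f x y x' y')
    (hf : ContinuousOn f (Icc 0 1)) (hxy : Icc x y ⊆ Icc 0 1) (hb : 0 ≤ b) (ha : a ≤ 1)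
    (hba : b < a) (hfb : f b = 1) (hfa : f a = 0) (hp : 0 ≤ p) (hpx : p ≤ x) (hfp : f p ≤ x) :
    ∃ u v, u < v ∧ Icc u v ⊆ Icc 0 1 ∧ Icc u v ∩ Icc x' y' ⊆ {x', y'} ∧
      f '' Icc u v = Icc x y := by
  have hx : 0 ≤ x := (hxy (left_mem_Icc.2 (h.1.trans (h.2.1.le.trans h.2.2.1)))).1
  have hy : y ≤ 1 := (hxy (right_mem_Icc.2 (h.1.trans (h.2.1.le.trans h.2.2.1)))).2
  rcases h.2.2.2.1 with ⟨hpres, -⟩ | ⟨hrev, -⟩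
  · have hsub : Icc b a ⊆ Icc 0 1 := Icc_subset_Icc hb ha
    obtain ⟨u, v, huv, hsub', hinter, himg⟩ := h.exists_split_of_preserving hpres (hf.mono hsub)
      hba.le (hfb ▸ hy) (hfa ▸ hx)
    exact ⟨u, v, huv, hsub'.trans hsub, hinter, himg⟩
  · have hsub : Icc p x' ⊆ Icc 0 1 := Icc_subset_Icc hp (h.2.1.le.trans (h.2.2.1.trans hy))
    obtain ⟨u, v, huv, hsub', hinter, himg⟩ :=
      h.exists_split_of_reversing hrev (hf.mono hsub) (hpx.trans h.1) hfp
    exact ⟨u, v, huv, hsub'.trans hsub, hinter, himg⟩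

lemma splittingSeq_of_fixedPt_lt_fixedPt {a b p q : ℝ} (hf : ContinuousOn f (Icc 0 1))
    (hb : 0 ≤ b) (ha : a ≤ 1) (hba : b < a) (hfb : f b = 1) (hfa : f a = 0)
    (hp : 0 ≤ p) (hq : q ≤ 1) (hpq : p < q) (hfp : f p = p) (hfq : f q = q)
    (hne : Icc p q ≠ Icc 0 1) : SplittingSeq f := by
  have hpq01 : Icc p q ⊆ Icc 0 1 := Icc_subset_Icc hp hq
  obtain ⟨x, y, rfl, rfl, ht⟩ := exists_seq_isTightPreimage (hf.mono hpq01) hpq hfp hfq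
  have hT : ∀ n, Icc (x n) (y n) ⊆ Icc (x 0) (y 0) := fun n =>
    antitone_nat_of_succ_le (f := fun n => Icc (x n) (y n))
      (fun n => Icc_subset_Icc (ht n).1 (ht n).2.2.1) (Nat.zero_le n)
  have himg : ∀ n, f '' Icc (x (n + 1)) (y (n + 1)) = Icc (x n) (y n) := fun n =>
    (ht n).image_eq (hf.mono ((hT _).trans hpq01))
  have hxy : ∀ n, x n < y n := fun n =>
    ((ht n).1.trans_lt (ht n).2.1).trans_le (ht n).2.2.1
  have hx : ∀ n, x 0 ≤ x n := fun n => (hT n (left_mem_Icc.2 (hxy n).le)).1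
  choose u v huv hsub hinter himgS using fun n =>
    (ht n).exists_split hf ((hT n).trans hpq01) hb ha hba hfb hfa hp (hx n) (hfp.trans_le (hx n))
  refine ⟨fun n => x (n + 1), fun n => y (n + 1), univ, fun n => Icc (u n) (v n),
    fun n => (hxy _).le, fun n => (hT _).trans hpq01, fun n h => hne ?_, fun n => himg _,
    ⟨0, fun n _ => hxy _⟩, infinite_univ,
    fun n _ => ⟨⟨u n, v n, huv n, rfl⟩, hsub n, hinter n, by rw [himgS, himg]⟩⟩
  exact hpq01.antisymm (h ▸ hT (n + 1))

end Splitting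

lemma exists_fixedPt_mem_Ioo {f : ℝ → ℝ} {b a : ℝ} (hf : ContinuousOn f (Icc b a))
    (hba : b ≤ a) (hfb : b < f b) (hfa : f a < a) : ∃ z ∈ Ioo b a, f z = z := by
  obtain ⟨z, hz, hfz⟩ := intermediate_value_Ioo' hba (hf.sub continuousOn_id)
    ⟨sub_neg.2 hfa, sub_pos.2 hfb⟩
  exact ⟨z, hz, sub_eq_zero.1 hfz⟩

theorem stmt_8_general (f : ℝ → ℝ) (hf : ContinuousOn f (Icc 0 1))
    (hns : ¬ SplittingSeq f)
    (a b : ℝ)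
    (ha : IsGreatest {x ∈ Icc (0:ℝ) 1 | f x = 0} a)
    (hb : IsLeast {x ∈ Icc (0:ℝ) 1 | f x = 1} b)
    (hba : b < a) :
    ∃! x, x ∈ Icc (0:ℝ) 1 ∧ f x = x := by
  obtain ⟨⟨ha01, hfa⟩, -⟩ := ha
  obtain ⟨⟨hb01, hfb⟩, -⟩ := hb
  obtain ⟨z, hz, hfz⟩ := exists_fixedPt_mem_Ioo (hf.mono (Icc_subset_Icc hb01.1 ha01.2)) hba.le
    (hfb ▸ hba.trans_le ha01.2) (hfa ▸ hb01.1.trans_lt hba)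
  have hz01 : z ∈ Ioo (0:ℝ) 1 := ⟨hb01.1.trans_lt hz.1, hz.2.trans_le ha01.2⟩
  refine ⟨z, ⟨Ioo_subset_Icc_self hz01, hfz⟩, fun w ⟨hw, hfw⟩ => ?_⟩
  by_contra hwz
  apply hns
  rcases lt_or_gt_of_ne hwz with hlt | hgt
  · exact splittingSeq_of_fixedPt_lt_fixedPt hf hb01.1 ha01.2 hba hfb hfa hw.1 hz01.2.le hlt hfw hfz
      fun h => hz01.2.ne ((Icc_eq_Icc_iff hlt.le).1 h).2
  · exact splittingSeq_of_fixedPt_lt_fixedPt hf hb01.1 ha01.2 hba hfb hfa hz01.1.le hw.2 hgt hfz hfw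
      fun h => hz01.1.ne' ((Icc_eq_Icc_iff hgt.le).1 h).1

theorem stmt_8 (f : ℝ → ℝ) (hf : ContinuousOn f (Icc 0 1))
    (hsurj : f '' Icc 0 1 = Icc 0 1) (hns : ¬ SplittingSeq f)
    (a b : ℝ)
    (ha : IsGreatest {x ∈ Icc (0:ℝ) 1 | f x = 0} a)
    (hb : IsLeast {x ∈ Icc (0:ℝ) 1 | f x = 1} b)
    (hba : b < a) :
    ∃! x, x ∈ Icc (0:ℝ) 1 ∧ f x = x :=
  stmt_8_general f hf hns a b ha hb hba
end
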